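/- arXiv:1507.00431 — 3 statements merged into one kernel-verified Lean document; each statement's English description precedes it below -/
import Mathlib

section
/- (Optimality of quadratic droop) Let B be the susceptance matrix of a connected weighted graph partitioned into loads and inverters, K_I diagonal with strictly negative entries, E_I* ∈ ℝ^m strictly positive, and b_shunt ∈ ℝ^n with −(B_red + [b_shunt]) positive definite with nonpositive off-diagonal entries. Define the cost C(E_L, E_I) = ∑_{i<j} B_{ij}(E_i − E_j)² − ∑_{i∈L} b_{shunt,i} E_i² − ∑_{i∈I} K_i(E_i − E_i*)², where E = (E_L, E_I) ∈ ℝ^{n+m}. Then C is strictly convex on ℝ^{n+m} and has a unique global minimizer (E_L^Z, E_I^Z), given by E_L^Z = (B_red + [b_shunt])^{−1}B_red E_L* and E_I^Z = (B_II + K_I)^{−1}(−B_IL E_L^Z + K_I E_I*); this minimizer has strictly positive entries and is the unique positive equilibrium of the quadratic-droop closed loop with constant-impedance loads Q_i(E_i) = b_{shunt,i} E_i². -/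
open Matrix

def suscGraph {V : Type*} (B : Matrix V V ℝ) : SimpleGraph V where
  Adj i j := i ≠ j ∧ 0 < B i j ∧ 0 < B j i
  symm := ⟨fun _ _ h => ⟨h.1.symm, h.2.2, h.2.1⟩⟩
  loopless := ⟨fun _ h => h.1 rfl⟩

def IsSusceptance {V : Type*} [Fintype V] [DecidableEq V] (B : Matrix V V ℝ) : Prop :=
  B.IsSymm ∧ (∀ i j, i ≠ j → 0 ≤ B i j) ∧
    (∀ i, B i i = -∑ j ∈ Finset.univ.erase i, B i j) ∧ (suscGraph B).Connected

/-!
The cost is the quadratic function `C(E) = Eᵀ A E - 2 gᵀ E + const` with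
`A = -(B + [b_shunt, K_I])` (`droopMatrix`) and `g = (0, -K_I E_I*) ≥ 0` (`droopSource`).
The block `-(B_II + K_I)` of `A` is positive definite (a Laplacian block plus a positive
diagonal) and its Schur complement is `-(B_red + [b_shunt])`, so `A` is positive definite;
block elimination shows that `E^Z` solves `A E = g`. Completing the square,
`C(E) = (E - E^Z)ᵀ A (E - E^Z) + C(E^Z)`, which gives strict convexity and the unique
minimizer. Dividing the equilibrium equations by the positive voltages turns them into
`A E = g`, whose only solution is `E^Z`. Finally `A` is a positive definite Z-matrix whose
off-diagonal pattern is the connected graph of `B`, so `A E = g` with `g ≥ 0`, `g ≠ 0`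
forces `E > 0`.
-/

namespace Matrix

variable {ι : Type*} [Fintype ι]

theorem inv_neg [DecidableEq ι] {R : Type*} [CommRing R] (A : Matrix ι ι R) :
    (-A)⁻¹ = -A⁻¹ := by
  by_cases hA : IsUnit A.det
  · exact inv_eq_left_inv (by rw [neg_mul_neg, nonsing_inv_mul _ hA])
  · have hnA : ¬IsUnit (-A).det := by
      rwa [det_neg, IsUnit.mul_iff, and_iff_right ((isUnit_neg_one (α := R)).pow _)]
    rw [nonsing_inv_apply_not_isUnit _ hA, nonsing_inv_apply_not_isUnit _ hnA, neg_zero]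

theorem IsSymm.dotProduct_mulVec_comm {R : Type*} [CommSemiring R] {A : Matrix ι ι R}
    (hA : A.IsSymm) (x y : ι → R) : x ⬝ᵥ A *ᵥ y = y ⬝ᵥ A *ᵥ x := by
  rw [dotProduct_mulVec, ← mulVec_transpose, hA.eq, dotProduct_comm]

theorem IsSymm.dotProduct_mulVec_sub_eq {A : Matrix ι ι ℝ} (hA : A.IsSymm) {z g : ι → ℝ}
    (hz : A *ᵥ z = g) (x : ι → ℝ) :
    (x - z) ⬝ᵥ A *ᵥ (x - z) = x ⬝ᵥ A *ᵥ x - 2 * (g ⬝ᵥ x) + z ⬝ᵥ A *ᵥ z := by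
  simp only [mulVec_sub, dotProduct_sub, sub_dotProduct]
  rw [hA.dotProduct_mulVec_comm z x, hz, dotProduct_comm x g]
  ring

theorem IsSymm.dotProduct_mulVec_add_smul {A : Matrix ι ι ℝ} (hA : A.IsSymm) (x y : ι → ℝ)
    {a b : ℝ} (hab : a + b = 1) :
    (a • x + b • y) ⬝ᵥ A *ᵥ (a • x + b • y) =
      a * (x ⬝ᵥ A *ᵥ x) + b * (y ⬝ᵥ A *ᵥ y) - a * b * ((x - y) ⬝ᵥ A *ᵥ (x - y)) := by
  simp only [mulVec_add, mulVec_sub, mulVec_smul, dotProduct_add, add_dotProduct,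
    dotProduct_sub, sub_dotProduct, dotProduct_smul, smul_dotProduct, smul_eq_mul]
  rw [hA.dotProduct_mulVec_comm y x]
  linear_combination (a * (x ⬝ᵥ A *ᵥ x) + b * (y ⬝ᵥ A *ᵥ y)) * hab

theorem PosDef.strictConvexOn_dotProduct_mulVec_sub {A : Matrix ι ι ℝ} (hA : A.PosDef)
    (z : ι → ℝ) : StrictConvexOn ℝ Set.univ fun x => (x - z) ⬝ᵥ A *ᵥ (x - z) := by
  refine ⟨convex_univ, fun x _ y _ hxy a b ha hb hab => ?_⟩
  have hshift : a • x + b • y - z = a • (x - z) + b • (y - z) := by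
    rw [smul_sub, smul_sub, sub_add_sub_comm, ← add_smul, hab, one_smul]
  have hpos : 0 < (x - z - (y - z)) ⬝ᵥ A *ᵥ (x - z - (y - z)) := by
    simpa using hA.dotProduct_mulVec_pos (sub_ne_zero.2 hxy)
  have hsymm : A.IsSymm := isHermitian_iff_isSymm.1 hA.isHermitian
  simp only [smul_eq_mul, hshift, hsymm.dotProduct_mulVec_add_smul _ _ hab]
  nlinarith [mul_pos (mul_pos ha hb) hpos]

theorem PosDef.fromBlocks₂₂_of_schur {κ : Type*} [Fintype κ] [DecidableEq κ]
    {A : Matrix ι ι ℝ} {B : Matrix ι κ ℝ} {D : Matrix κ κ ℝ} (hD : D.PosDef)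
    (hA : A.IsHermitian) (hS : (A - B * D⁻¹ * Bᴴ).PosDef) : (fromBlocks A B Bᴴ D).PosDef := by
  have := hD.isUnit.invertible
  rw [posDef_iff_dotProduct_mulVec]
  refine ⟨hA.fromBlocks rfl hD.isHermitian, fun x hx => ?_⟩
  rw [dotProduct_mulVec, ← Sum.elim_comp_inl_inr x, schur_complement_eq₂₂ _ _ _ _ hD.isHermitian,
    ← dotProduct_mulVec, ← dotProduct_mulVec]
  rcases eq_or_ne (x ∘ Sum.inl) 0 with hu | hu
  · have hv : x ∘ Sum.inr ≠ 0 := fun hv =>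
      hx (by rw [← Sum.elim_comp_inl_inr x, hu, hv]; ext (i | i) <;> rfl)
    simpa [hu] using hD.dotProduct_mulVec_pos hv
  · exact add_pos_of_nonneg_of_pos (hD.posSemidef.dotProduct_mulVec_nonneg _)
      (hS.dotProduct_mulVec_pos hu)

section ZMatrix

variable {A : Matrix ι ι ℝ} {x : ι → ℝ}

theorem PosDef.nonneg_of_mulVec_nonneg (hA : A.PosDef) (hoff : ∀ i j, i ≠ j → A i j ≤ 0)
    (hAx : 0 ≤ A *ᵥ x) : 0 ≤ x := by
  set p : ι → ℝ := fun i => (x i)⁺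
  set q : ι → ℝ := fun i => (x i)⁻
  -- `x⁺` and `x⁻` have disjoint supports, so only off-diagonal entries of `A` enter here;
  -- then `qᵀ A q = qᵀ A p - qᵀ A x ≤ 0` forces `q = 0`.
  have hqp : q ⬝ᵥ A *ᵥ p ≤ 0 := by
    simp only [dotProduct, mulVec, Finset.mul_sum]
    refine Finset.sum_nonpos fun i _ => Finset.sum_nonpos fun j _ => ?_
    rcases eq_or_ne i j with rfl | hij
    · rcases le_total 0 (x i) with h | h <;> simp [q, p, h]
    · exact mul_nonpos_of_nonneg_of_nonpos (negPart_nonneg _)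
        (mul_nonpos_of_nonpos_of_nonneg (hoff i j hij) (posPart_nonneg _))
  have hq : q = 0 := by
    by_contra hq
    have hpos := hA.dotProduct_mulVec_pos hq
    have hx : x = p - q := funext fun i => (posPart_sub_negPart (x i)).symm
    have hqx : 0 ≤ q ⬝ᵥ A *ᵥ x := dotProduct_nonneg_of_nonneg (fun i => negPart_nonneg _) hAx
    rw [hx, mulVec_sub, dotProduct_sub] at hqx
    simp only [star_trivial] at hpos
    linarith
  exact fun i => negPart_eq_zero.1 (congrFun hq i)

theorem pos_of_mulVec_nonneg_of_connected {G : SimpleGraph ι} (hG : G.Connected)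
    (hadj : ∀ i j, G.Adj i j → A i j ≠ 0) (hoff : ∀ i j, i ≠ j → A i j ≤ 0)
    (hx : 0 ≤ x) (hAx : 0 ≤ A *ᵥ x) (hx0 : x ≠ 0) (i : ι) : 0 < x i := by
  have hzero : ∀ i j, x i = 0 → G.Adj i j → x j = 0 := by
    intro i j hi hij
    have hterm : ∀ k ∈ Finset.univ, A i k * x k ≤ 0 := fun k _ => by
      rcases eq_or_ne i k with rfl | hik
      · simp [hi]
      · exact mul_nonpos_of_nonpos_of_nonneg (hoff i k hik) (hx k)
    have hsum : ∑ k, A i k * x k = 0 := le_antisymm (Finset.sum_nonpos hterm) (hAx i)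
    have := (Finset.sum_eq_zero_iff_of_nonpos hterm).1 hsum j (Finset.mem_univ j)
    exact (mul_eq_zero.1 this).resolve_left (hadj i j hij)
  refine (hx i).lt_of_ne fun hi => ?_
  obtain ⟨j, hj⟩ := Function.ne_iff.1 hx0
  obtain ⟨p⟩ := hG.preconnected i j
  obtain ⟨d, -, hd1, hd2⟩ := p.exists_boundary_dart {k | x k = 0} hi.symm hj
  exact hd2 (hzero _ _ hd1 d.adj)

end ZMatrix

end Matrix

section Susceptance

variable {V : Type*} [Fintype V] {B : Matrix V V ℝ}

theorem half_sum_mul_sub_sq_eq_neg_dotProduct_mulVec (hB : B.IsSymm)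
    (hrow : ∀ i, ∑ j, B i j = 0) (x : V → ℝ) :
    1 / 2 * ∑ i, ∑ j, B i j * (x i - x j) ^ 2 = -(x ⬝ᵥ B *ᵥ x) := by
  have hterm : ∀ i j, B i j * (x i - x j) ^ 2
      = x i ^ 2 * B i j + x j ^ 2 * B j i - 2 * (x i * (B i j * x j)) := fun i j => by
    rw [hB.apply i j]; ring
  simp_rw [hterm, Finset.sum_sub_distrib, Finset.sum_add_distrib, ← Finset.mul_sum]
  rw [Finset.sum_comm (f := fun i j => x j ^ 2 * B j i)]
  simp_rw [← Finset.mul_sum, hrow, mul_zero, Finset.sum_const_zero, zero_add]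
  rw [show x ⬝ᵥ B *ᵥ x = ∑ i, x i * ∑ j, B i j * x j from rfl]
  ring

variable [DecidableEq V]

theorem IsSusceptance.sum_apply_eq_zero (hB : IsSusceptance B) (i : V) : ∑ j, B i j = 0 := by
  rw [← Finset.add_sum_erase _ _ (Finset.mem_univ i), hB.2.2.1 i, neg_add_cancel]

theorem IsSusceptance.posSemidef_neg (hB : IsSusceptance B) : (-B).PosSemidef := by
  rw [posSemidef_iff_dotProduct_mulVec]
  refine ⟨isHermitian_iff_isSymm.2 hB.1.neg, fun x => ?_⟩
  rw [star_trivial, neg_mulVec, dotProduct_neg,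
    ← half_sum_mul_sub_sq_eq_neg_dotProduct_mulVec hB.1 hB.sum_apply_eq_zero]
  refine mul_nonneg (by norm_num) (Finset.sum_nonneg fun i _ => Finset.sum_nonneg fun j _ => ?_)
  rcases eq_or_ne i j with rfl | hij
  · simp
  · exact mul_nonneg (hB.2.1 i j hij) (sq_nonneg _)

end Susceptance

section Droop

variable {L I : Type*}

def droopSource (k EIstar : I → ℝ) : L ⊕ I → ℝ :=
  Sum.elim 0 fun i => -(k i * EIstar i)

variable {k EIstar : I → ℝ}

theorem droopSource_nonneg (hk : ∀ i, k i < 0) (hEIstar : ∀ i, 0 < EIstar i) :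
    0 ≤ (droopSource k EIstar : L ⊕ I → ℝ) := by
  rintro (i | i)
  · exact le_rfl
  · exact neg_nonneg.2 (mul_neg_of_neg_of_pos (hk i) (hEIstar i)).le

theorem droopSource_ne_zero [Nonempty I] (hk : ∀ i, k i < 0) (hEIstar : ∀ i, 0 < EIstar i) :
    (droopSource k EIstar : L ⊕ I → ℝ) ≠ 0 := by
  obtain ⟨i⟩ := ‹Nonempty I›
  refine Function.ne_iff.2 ⟨Sum.inr i, neg_ne_zero.2 ?_⟩
  exact (mul_neg_of_neg_of_pos (hk i) (hEIstar i)).ne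

variable [DecidableEq L] [DecidableEq I]

def droopMatrix (B : Matrix (L ⊕ I) (L ⊕ I) ℝ) (bshunt : L → ℝ) (k : I → ℝ) :
    Matrix (L ⊕ I) (L ⊕ I) ℝ :=
  -(B + diagonal (Sum.elim bshunt k))

variable {B : Matrix (L ⊕ I) (L ⊕ I) ℝ} {bshunt : L → ℝ}

theorem droopMatrix_eq_fromBlocks (B : Matrix (L ⊕ I) (L ⊕ I) ℝ) (bshunt : L → ℝ) (k : I → ℝ) :
    droopMatrix B bshunt k = fromBlocks (-(B.toBlocks₁₁ + diagonal bshunt)) (-B.toBlocks₁₂)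
      (-B.toBlocks₂₁) (-(B.toBlocks₂₂ + diagonal k)) := by
  conv_lhs => rw [droopMatrix, ← fromBlocks_toBlocks B, ← fromBlocks_diagonal]
  simp only [fromBlocks_add, fromBlocks_neg, add_zero]

theorem droopMatrix_apply_of_ne {i j : L ⊕ I} (hij : i ≠ j) :
    droopMatrix B bshunt k i j = -B i j := by
  simp [droopMatrix, diagonal_apply_ne _ hij]

variable [Fintype L] [Fintype I]

noncomputable def droopCost (B : Matrix (L ⊕ I) (L ⊕ I) ℝ) (bshunt : L → ℝ) (k EIstar : I → ℝ)
    (E : L ⊕ I → ℝ) : ℝ :=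
  1 / 2 * (∑ i, ∑ j, B i j * (E i - E j) ^ 2) - (∑ i, bshunt i * E (Sum.inl i) ^ 2) -
    ∑ i, k i * (E (Sum.inr i) - EIstar i) ^ 2

theorem droopMatrix_mulVec_sum_elim (EL : L → ℝ) (EI : I → ℝ) :
    droopMatrix B bshunt k *ᵥ Sum.elim EL EI =
      Sum.elim (-((B.toBlocks₁₁ + diagonal bshunt) *ᵥ EL + B.toBlocks₁₂ *ᵥ EI))
        (-(B.toBlocks₂₁ *ᵥ EL + (B.toBlocks₂₂ + diagonal k) *ᵥ EI)) := by
  simp only [droopMatrix_eq_fromBlocks, fromBlocks_mulVec, Sum.elim_comp_inl, Sum.elim_comp_inr,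
    neg_mulVec]
  simp only [neg_add]

theorem droopCost_eq (hB : IsSusceptance B) (E : L ⊕ I → ℝ) :
    droopCost B bshunt k EIstar E = E ⬝ᵥ droopMatrix B bshunt k *ᵥ E -
      2 * (droopSource k EIstar ⬝ᵥ E) - ∑ i, k i * EIstar i ^ 2 := by
  have hdiag : E ⬝ᵥ diagonal (Sum.elim bshunt k) *ᵥ E =
      ∑ i, bshunt i * E (Sum.inl i) ^ 2 + ∑ i, k i * E (Sum.inr i) ^ 2 := by
    simp only [dotProduct, mulVec_diagonal, Fintype.sum_sum_type, Sum.elim_inl, Sum.elim_inr]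
    congr 1 <;> exact Finset.sum_congr rfl fun i _ => by ring
  have hsource : droopSource k EIstar ⬝ᵥ E = -∑ i, k i * EIstar i * E (Sum.inr i) := by
    simp [droopSource, dotProduct, Fintype.sum_sum_type]
  have hsq : ∑ i, k i * (E (Sum.inr i) - EIstar i) ^ 2 = ∑ i, k i * E (Sum.inr i) ^ 2 -
      2 * ∑ i, k i * EIstar i * E (Sum.inr i) + ∑ i, k i * EIstar i ^ 2 := by
    simp only [Finset.mul_sum, ← Finset.sum_sub_distrib, ← Finset.sum_add_distrib]
    exact Finset.sum_congr rfl fun i _ => by ring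
  rw [droopCost, half_sum_mul_sub_sq_eq_neg_dotProduct_mulVec hB.1 hB.sum_apply_eq_zero, hsq,
    droopMatrix, neg_mulVec, dotProduct_neg, add_mulVec, dotProduct_add, hdiag, hsource]
  ring

theorem droopCost_eq_add_dotProduct_mulVec_sub (hB : IsSusceptance B) {z : L ⊕ I → ℝ}
    (hz : droopMatrix B bshunt k *ᵥ z = droopSource k EIstar) (E : L ⊕ I → ℝ) :
    droopCost B bshunt k EIstar E =
      (E - z) ⬝ᵥ droopMatrix B bshunt k *ᵥ (E - z) + droopCost B bshunt k EIstar z := by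
  have hsymm : (droopMatrix B bshunt k).IsSymm := (hB.1.add (isSymm_diagonal _)).neg
  rw [droopCost_eq hB, droopCost_eq hB, hsymm.dotProduct_mulVec_sub_eq hz, ← hz,
    dotProduct_comm _ z]
  ring

theorem IsSusceptance.posDef_neg_toBlocks₂₂_add_diagonal (hB : IsSusceptance B)
    (hk : ∀ i, k i < 0) : (-(B.toBlocks₂₂ + diagonal k)).PosDef := by
  rw [neg_add, diagonal_neg]
  exact PosDef.posSemidef_add (hB.posSemidef_neg.submatrix Sum.inr)
    (PosDef.diagonal fun i => neg_pos.2 (hk i))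

theorem IsSusceptance.toBlocks₂₁_eq_conjTranspose (hB : IsSusceptance B) :
    B.toBlocks₂₁ = B.toBlocks₁₂ᴴ := by
  ext i j
  exact (hB.1.apply _ _).symm

theorem posDef_droopMatrix (hB : IsSusceptance B) (hk : ∀ i, k i < 0) {Bred : Matrix L L ℝ}
    (hBred : Bred = B.toBlocks₁₁ -
      B.toBlocks₁₂ * (B.toBlocks₂₂ + diagonal k)⁻¹ * B.toBlocks₂₁)
    (hS : (-(Bred + diagonal bshunt)).PosDef) : (droopMatrix B bshunt k).PosDef := by
  rw [droopMatrix_eq_fromBlocks, hB.toBlocks₂₁_eq_conjTranspose, ← conjTranspose_neg]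
  refine (hB.posDef_neg_toBlocks₂₂_add_diagonal hk).fromBlocks₂₂_of_schur ?_ ?_
  · exact isHermitian_iff_isSymm.2 ((hB.1.submatrix Sum.inl).add (isSymm_diagonal _)).neg
  · convert hS using 1
    rw [hBred, hB.toBlocks₂₁_eq_conjTranspose, Matrix.inv_neg, conjTranspose_neg]
    simp only [Matrix.neg_mul, Matrix.mul_neg, neg_neg]
    abel

theorem droopMatrix_mulVec_sum_elim_eq_droopSource {Bred : Matrix L L ℝ}
    (hBred : Bred = B.toBlocks₁₁ -
      B.toBlocks₁₂ * (B.toBlocks₂₂ + diagonal k)⁻¹ * B.toBlocks₂₁)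
    (hBK : IsUnit (B.toBlocks₂₂ + diagonal k).det) {ELstar : L → ℝ}
    (hELstar : Bred *ᵥ ELstar =
      -((B.toBlocks₁₂ * (B.toBlocks₂₂ + diagonal k)⁻¹ * diagonal k) *ᵥ EIstar))
    {EL : L → ℝ} {EI : I → ℝ} (hL : (Bred + diagonal bshunt) *ᵥ EL = Bred *ᵥ ELstar)
    (hI : (B.toBlocks₂₂ + diagonal k) *ᵥ EI = -(B.toBlocks₂₁ *ᵥ EL) + diagonal k *ᵥ EIstar) :
    droopMatrix B bshunt k *ᵥ Sum.elim EL EI = droopSource k EIstar := by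
  have hEI : EI = (B.toBlocks₂₂ + diagonal k)⁻¹ *ᵥ
      (-(B.toBlocks₂₁ *ᵥ EL) + diagonal k *ᵥ EIstar) := by
    rw [← hI, mulVec_mulVec, nonsing_inv_mul _ hBK, one_mulVec]
  have hLL : B.toBlocks₁₁ + diagonal bshunt = Bred + diagonal bshunt +
      B.toBlocks₁₂ * (B.toBlocks₂₂ + diagonal k)⁻¹ * B.toBlocks₂₁ := by
    rw [hBred]; abel
  rw [droopMatrix_mulVec_sum_elim, droopSource, Sum.elim_eq_iff, hI]
  constructor
  · rw [hLL, hEI, add_mulVec, hL, hELstar]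
    simp only [mulVec_add, mulVec_neg, mulVec_mulVec, Matrix.mul_assoc]
    abel
  · ext i
    simp [mulVec_diagonal]

theorem droop_equilibrium_iff {EL : L → ℝ} {EI : I → ℝ} (hEL : ∀ i, 0 < EL i)
    (hEI : ∀ i, 0 < EI i) :
    (0 = (fun i => bshunt i * EL i ^ 2) +
        diagonal EL *ᵥ (B.toBlocks₁₁ *ᵥ EL + B.toBlocks₁₂ *ᵥ EI) ∧
      0 = diagonal EI *ᵥ (diagonal k *ᵥ (EI - EIstar)) +
        diagonal EI *ᵥ (B.toBlocks₂₁ *ᵥ EL + B.toBlocks₂₂ *ᵥ EI)) ↔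
    droopMatrix B bshunt k *ᵥ Sum.elim EL EI = droopSource k EIstar := by
  rw [droopMatrix_mulVec_sum_elim, droopSource, Sum.elim_eq_iff, funext_iff, funext_iff,
    funext_iff, funext_iff]
  refine and_congr (forall_congr' fun i => ?_) (forall_congr' fun i => ?_)
  · simp only [Pi.zero_apply, Pi.add_apply, Pi.neg_apply, add_mulVec, mulVec_diagonal]
    rw [neg_eq_zero, eq_comm, show bshunt i * EL i ^ 2 + EL i * ((B.toBlocks₁₁ *ᵥ EL) i +
      (B.toBlocks₁₂ *ᵥ EI) i) = EL i * ((B.toBlocks₁₁ *ᵥ EL) i + bshunt i * EL i +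
      (B.toBlocks₁₂ *ᵥ EI) i) by ring, mul_eq_zero, or_iff_right (hEL i).ne']
  · simp only [Pi.zero_apply, Pi.add_apply, Pi.neg_apply, Pi.sub_apply, add_mulVec,
      mulVec_diagonal]
    rw [neg_inj, eq_comm, ← mul_add, mul_eq_zero, or_iff_right (hEI i).ne']
    constructor <;> intro h <;> linarith

theorem pos_of_droopMatrix_mulVec_eq_droopSource [Nonempty I] (hB : IsSusceptance B)
    (hk : ∀ i, k i < 0) (hEIstar : ∀ i, 0 < EIstar i) (hA : (droopMatrix B bshunt k).PosDef)
    {E : L ⊕ I → ℝ} (hE : droopMatrix B bshunt k *ᵥ E = droopSource k EIstar) (v : L ⊕ I) :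
    0 < E v := by
  have hoff : ∀ i j, i ≠ j → droopMatrix B bshunt k i j ≤ 0 := fun i j hij => by
    rw [droopMatrix_apply_of_ne hij]
    exact neg_nonpos.2 (hB.2.1 i j hij)
  have hAE : 0 ≤ droopMatrix B bshunt k *ᵥ E := hE ▸ droopSource_nonneg hk hEIstar
  have hE0 : E ≠ 0 := by
    rintro rfl
    exact droopSource_ne_zero hk hEIstar (hE ▸ mulVec_zero _)
  refine pos_of_mulVec_nonneg_of_connected hB.2.2.2 (fun i j hij => ?_) hoff
    (hA.nonneg_of_mulVec_nonneg hoff hAE) hAE hE0 v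
  rw [droopMatrix_apply_of_ne hij.1]
  exact neg_ne_zero.2 hij.2.1.ne'

end Droop

theorem quadratic_droop_optimality_general {n m : ℕ} (hm : 0 < m)
    (B : Matrix (Fin n ⊕ Fin m) (Fin n ⊕ Fin m) ℝ) (hB : IsSusceptance B)
    (k : Fin m → ℝ) (hk : ∀ i, k i < 0)
    (EIstar : Fin m → ℝ) (hEIstar : ∀ i, 0 < EIstar i)
    (hinv1 : IsUnit (B.toBlocks₂₂ + Matrix.diagonal k).det)
    (Bred : Matrix (Fin n) (Fin n) ℝ)
    (hBred : Bred = B.toBlocks₁₁ -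
      B.toBlocks₁₂ * (B.toBlocks₂₂ + Matrix.diagonal k)⁻¹ * B.toBlocks₂₁)
    (hinv2 : IsUnit Bred.det)
    (ELstar : Fin n → ℝ)
    (hELstar : ELstar = (-(Bred⁻¹ * B.toBlocks₁₂ *
      (B.toBlocks₂₂ + Matrix.diagonal k)⁻¹ * Matrix.diagonal k)).mulVec EIstar)
    (bshunt : Fin n → ℝ)
    (hM1 : (-(Bred + Matrix.diagonal bshunt)).PosDef) :
    let C : ((Fin n ⊕ Fin m) → ℝ) → ℝ := fun E =>
      (1 / 2) * (∑ i, ∑ j, B i j * (E i - E j) ^ 2) -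
        (∑ i, bshunt i * (E (Sum.inl i)) ^ 2) -
        (∑ i, k i * (E (Sum.inr i) - EIstar i) ^ 2)
    let ELZ := (Bred + Matrix.diagonal bshunt)⁻¹.mulVec (Bred.mulVec ELstar)
    let EIZ := (B.toBlocks₂₂ + Matrix.diagonal k)⁻¹.mulVec
      (-(B.toBlocks₂₁.mulVec ELZ) + (Matrix.diagonal k).mulVec EIstar)
    let EZ : (Fin n ⊕ Fin m) → ℝ := Sum.elim ELZ EIZ
    StrictConvexOn ℝ Set.univ C ∧
    (∀ i, 0 < EZ i) ∧
    (∀ E : (Fin n ⊕ Fin m) → ℝ, E ≠ EZ → C EZ < C E) ∧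
    (∀ (EL : Fin n → ℝ) (EI : Fin m → ℝ), (∀ i, 0 < EL i) → (∀ i, 0 < EI i) →
      ((((0 : Fin n → ℝ) = (fun i => bshunt i * (EL i) ^ 2) +
          (Matrix.diagonal EL).mulVec
            (B.toBlocks₁₁.mulVec EL + B.toBlocks₁₂.mulVec EI)) ∧
        ((0 : Fin m → ℝ) =
          (Matrix.diagonal EI).mulVec ((Matrix.diagonal k).mulVec (EI - EIstar)) +
          (Matrix.diagonal EI).mulVec
            (B.toBlocks₂₁.mulVec EL + B.toBlocks₂₂.mulVec EI)))
      ↔ (EL = ELZ ∧ EI = EIZ))) := by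
  intro C ELZ EIZ EZ
  have := Fin.pos_iff_nonempty.1 hm
  have hP : IsUnit (Bred + diagonal bshunt).det :=
    (isUnit_iff_isUnit_det _).1 (by simpa using hM1.isUnit.neg)
  have hA := posDef_droopMatrix hB hk hBred hM1
  have hAEZ : droopMatrix B bshunt k *ᵥ EZ = droopSource k EIstar := by
    refine droopMatrix_mulVec_sum_elim_eq_droopSource (ELstar := ELstar) hBred hinv1 ?_ ?_ ?_
    · rw [hELstar, mulVec_mulVec, Matrix.mul_neg, Matrix.mul_assoc, Matrix.mul_assoc,
        mul_nonsing_inv_cancel_left _ _ hinv2, ← Matrix.mul_assoc, neg_mulVec]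
    · rw [mulVec_mulVec, mul_nonsing_inv _ hP, one_mulVec]
    · rw [mulVec_mulVec, mul_nonsing_inv _ hinv1, one_mulVec]
  have hC : C = fun E => (E - EZ) ⬝ᵥ droopMatrix B bshunt k *ᵥ (E - EZ) + C EZ :=
    funext (droopCost_eq_add_dotProduct_mulVec_sub hB hAEZ)
  refine ⟨hC ▸ (hA.strictConvexOn_dotProduct_mulVec_sub EZ).add_const (C EZ),
    pos_of_droopMatrix_mulVec_eq_droopSource hB hk hEIstar hA hAEZ, fun E hE => ?_,
    fun EL EI hEL hEI => ?_⟩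
  · rw [hC]
    simpa using hA.dotProduct_mulVec_pos (sub_ne_zero.2 hE)
  · rw [droop_equilibrium_iff hEL hEI, ← hAEZ, (mulVec_injective_iff_isUnit.2 hA.isUnit).eq_iff,
      Sum.elim_eq_iff]

/-- Optimality of quadratic droop: the cost
`C(E) = Σ_{i<j} B_ij (E_i - E_j)² - Σ_{i∈L} b_i E_i² - Σ_{i∈I} K_i (E_i - E_i*)²`
(written here with the equivalent `½ Σ_i Σ_j` form of the first sum) is strictly
convex, its unique global minimizer is `(E_L^Z, E_I^Z)` as given, this minimizer is
strictly positive, and it is the unique positive equilibrium of the quadratic-droop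
closed loop with constant-impedance loads `Q_i(E_i) = b_i E_i²`. -/
theorem quadratic_droop_optimality {n m : ℕ} (hn : 0 < n) (hm : 0 < m)
    (B : Matrix (Fin n ⊕ Fin m) (Fin n ⊕ Fin m) ℝ) (hB : IsSusceptance B)
    (k : Fin m → ℝ) (hk : ∀ i, k i < 0)
    (EIstar : Fin m → ℝ) (hEIstar : ∀ i, 0 < EIstar i)
    (hinv1 : IsUnit (B.toBlocks₂₂ + Matrix.diagonal k).det)
    (Bred : Matrix (Fin n) (Fin n) ℝ)
    (hBred : Bred = B.toBlocks₁₁ -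
      B.toBlocks₁₂ * (B.toBlocks₂₂ + Matrix.diagonal k)⁻¹ * B.toBlocks₂₁)
    (hinv2 : IsUnit Bred.det)
    (ELstar : Fin n → ℝ)
    (hELstar : ELstar = (-(Bred⁻¹ * B.toBlocks₁₂ *
      (B.toBlocks₂₂ + Matrix.diagonal k)⁻¹ * Matrix.diagonal k)).mulVec EIstar)
    (bshunt : Fin n → ℝ)
    (hM1 : (-(Bred + Matrix.diagonal bshunt)).PosDef)
    (hM2 : ∀ i j, i ≠ j → (-(Bred + Matrix.diagonal bshunt)) i j ≤ 0) :
    let C : ((Fin n ⊕ Fin m) → ℝ) → ℝ := fun E =>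
      (1 / 2) * (∑ i, ∑ j, B i j * (E i - E j) ^ 2) -
        (∑ i, bshunt i * (E (Sum.inl i)) ^ 2) -
        (∑ i, k i * (E (Sum.inr i) - EIstar i) ^ 2)
    let ELZ := (Bred + Matrix.diagonal bshunt)⁻¹.mulVec (Bred.mulVec ELstar)
    let EIZ := (B.toBlocks₂₂ + Matrix.diagonal k)⁻¹.mulVec
      (-(B.toBlocks₂₁.mulVec ELZ) + (Matrix.diagonal k).mulVec EIstar)
    let EZ : (Fin n ⊕ Fin m) → ℝ := Sum.elim ELZ EIZ
    StrictConvexOn ℝ Set.univ C ∧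
    (∀ i, 0 < EZ i) ∧
    (∀ E : (Fin n ⊕ Fin m) → ℝ, E ≠ EZ → C EZ < C E) ∧
    (∀ (EL : Fin n → ℝ) (EI : Fin m → ℝ), (∀ i, 0 < EL i) → (∀ i, 0 < EI i) →
      ((((0 : Fin n → ℝ) = (fun i => bshunt i * (EL i) ^ 2) +
          (Matrix.diagonal EL).mulVec
            (B.toBlocks₁₁.mulVec EL + B.toBlocks₁₂.mulVec EI)) ∧
        ((0 : Fin m → ℝ) =
          (Matrix.diagonal EI).mulVec ((Matrix.diagonal k).mulVec (EI - EIstar)) +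
          (Matrix.diagonal EI).mulVec
            (B.toBlocks₂₁.mulVec EL + B.toBlocks₂₂.mulVec EI)))
      ↔ (EL = ELZ ∧ EI = EIZ))) :=
  quadratic_droop_optimality_general hm B hB k hk EIstar hEIstar hinv1 Bred hBred hinv2 ELstar
    hELstar bshunt hM1
end

section
/- (Linearized power sharing formula) Let B be the susceptance matrix of a connected weighted graph partitioned into loads and inverters, K_I diagonal with strictly negative entries, E_N > 0, and Q_L ∈ ℝ^n. Define the approximate load voltages E_L := E_N(1_n − (1/E_N²)B_red^{−1}Q_L) and the inverter voltages E_I := (B_II + K_I)^{−1}(−B_IL E_L + K_I·E_N 1_m). Then E_I = E_N 1_m + (1/E_N)(B_II+K_I)^{−1}B_IL B_red^{−1}Q_L, and consequently the linearized inverter reactive power injections Q_I := E_N·K_I(E_I − E_N 1_m) satisfy Q_I = K_I(B_II + K_I)^{−1}B_IL B_red^{−1}Q_L. -/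
open Matrix

/-!
Zero row sums of `B` give `B_IL 1 + B_II 1 = 0`, so the right-hand side `-B_IL E_L + K_I E_N 1`
equals `(B_II + K_I)(E_N 1) + (1/E_N) B_IL B_red⁻¹ Q_L`; applying `(B_II + K_I)⁻¹` yields `E_I`,
and `Q_I` follows by multiplying `E_I - E_N 1` by `E_N K_I`.
-/

theorem Matrix.mulVec_one_eq_zero_of_diag_eq_neg_sum {V R : Type*} [Fintype V] [DecidableEq V]
    [NonAssocRing R] {B : Matrix V V R} (h : ∀ i, B i i = -∑ j ∈ Finset.univ.erase i, B i j) :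
    B *ᵥ 1 = 0 := by
  funext i
  rw [Pi.zero_apply, mulVec, dotProduct, ← Finset.add_sum_erase _ _ (Finset.mem_univ i)]
  simp only [Pi.one_apply, mul_one, h i, neg_add_cancel]

theorem IsSusceptance.mulVec_one {V : Type*} [Fintype V] [DecidableEq V] {B : Matrix V V ℝ}
    (hB : IsSusceptance B) : B *ᵥ 1 = 0 :=
  mulVec_one_eq_zero_of_diag_eq_neg_sum hB.2.2.1

theorem Matrix.toBlocks₂₁_mulVec_add_toBlocks₂₂_mulVec {l m R : Type*} [Fintype l] [Fintype m]
    [NonUnitalNonAssocSemiring R] (B : Matrix (l ⊕ m) (l ⊕ m) R) (x : l ⊕ m → R) :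
    B.toBlocks₂₁ *ᵥ (x ∘ Sum.inl) + B.toBlocks₂₂ *ᵥ (x ∘ Sum.inr) = (B *ᵥ x) ∘ Sum.inr := by
  conv_rhs => rw [← fromBlocks_toBlocks B, fromBlocks_mulVec]
  rfl

theorem Matrix.toBlocks₂₁_mulVec_one_add_toBlocks₂₂_mulVec_one {l m R : Type*}
    [Fintype l] [Fintype m] [NonAssocSemiring R] {B : Matrix (l ⊕ m) (l ⊕ m) R}
    (hB : B *ᵥ 1 = 0) : B.toBlocks₂₁ *ᵥ 1 + B.toBlocks₂₂ *ᵥ 1 = 0 := by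
  simpa [hB] using B.toBlocks₂₁_mulVec_add_toBlocks₂₂_mulVec 1

theorem Matrix.inv_mulVec_neg_mulVec_add_mulVec_const {l m R : Type*} [Fintype l] [Fintype m]
    [DecidableEq m] [CommRing R] {C : Matrix m l R} {D K : Matrix m m R}
    (hCD : C *ᵥ 1 + D *ᵥ 1 = 0) (hA : IsUnit (D + K).det) (c : R) (x : l → R) :
    (D + K)⁻¹ *ᵥ (-(C *ᵥ (Function.const l c - x)) + K *ᵥ Function.const m c) =
      Function.const m c + ((D + K)⁻¹ * C) *ᵥ x := by
  have hl : Function.const l c = c • 1 := by funext; simp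
  have hm : Function.const m c = c • 1 := by funext; simp
  have hrhs : -(C *ᵥ (Function.const l c - x)) + K *ᵥ Function.const m c =
      (D + K) *ᵥ Function.const m c + C *ᵥ x := by
    rw [hl, hm, mulVec_sub, add_mulVec, mulVec_smul, mulVec_smul, mulVec_smul,
      eq_neg_of_add_eq_zero_right hCD]
    simp only [smul_neg]
    abel
  rw [hrhs, mulVec_add, mulVec_mulVec, nonsing_inv_mul _ hA, one_mulVec, mulVec_mulVec]

theorem linearized_power_sharing_general {n m : ℕ}
    (B : Matrix (Fin n ⊕ Fin m) (Fin n ⊕ Fin m) ℝ) (hB : IsSusceptance B)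
    (k : Fin m → ℝ)
    (EN : ℝ) (hEN : 0 < EN) (QL : Fin n → ℝ)
    (hinv1 : IsUnit (B.toBlocks₂₂ + Matrix.diagonal k).det)
    (Bred : Matrix (Fin n) (Fin n) ℝ) :
    let EL : Fin n → ℝ := fun i => EN * (1 - (1 / EN ^ 2) * Bred⁻¹.mulVec QL i)
    let EI : Fin m → ℝ := (B.toBlocks₂₂ + Matrix.diagonal k)⁻¹.mulVec
      (-(B.toBlocks₂₁.mulVec EL) +
        (Matrix.diagonal k).mulVec (Function.const (Fin m) EN))
    (EI = Function.const (Fin m) EN + (1 / EN) •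
        ((B.toBlocks₂₂ + Matrix.diagonal k)⁻¹ * B.toBlocks₂₁ * Bred⁻¹).mulVec QL) ∧
    (EN • (Matrix.diagonal k).mulVec (EI - Function.const (Fin m) EN) =
      (Matrix.diagonal k * (B.toBlocks₂₂ + Matrix.diagonal k)⁻¹ * B.toBlocks₂₁ *
        Bred⁻¹).mulVec QL) := by
  intro EL EI
  have hEL : EL = Function.const (Fin n) EN - (1 / EN) • Bred⁻¹ *ᵥ QL := by
    funext i
    simp only [EL, Pi.sub_apply, Pi.smul_apply, Function.const_apply, smul_eq_mul]
    field_simp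
  have hEI : EI = Function.const (Fin m) EN + (1 / EN) •
      ((B.toBlocks₂₂ + diagonal k)⁻¹ * B.toBlocks₂₁ * Bred⁻¹) *ᵥ QL := by
    simp only [EI]
    rw [hEL, inv_mulVec_neg_mulVec_add_mulVec_const
      (toBlocks₂₁_mulVec_one_add_toBlocks₂₂_mulVec_one hB.mulVec_one) hinv1,
      mulVec_smul, mulVec_mulVec]
  refine ⟨hEI, ?_⟩
  rw [hEI, add_sub_cancel_left, mulVec_smul, smul_smul, mul_one_div_cancel hEN.ne', one_smul,
    mulVec_mulVec, Matrix.mul_assoc, Matrix.mul_assoc, Matrix.mul_assoc]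

/-- Linearized power sharing formula: with the approximate load
voltages `E_L = E_N(1 - (1/E_N²) B_red⁻¹ Q_L)` and the recovered inverter voltages
`E_I = (B_II+K_I)⁻¹(-B_IL E_L + K_I E_N 1)`, one has
`E_I = E_N 1 + (1/E_N)(B_II+K_I)⁻¹ B_IL B_red⁻¹ Q_L` and the linearized injections
`Q_I = E_N K_I (E_I - E_N 1)` satisfy `Q_I = K_I (B_II+K_I)⁻¹ B_IL B_red⁻¹ Q_L`. -/
theorem linearized_power_sharing {n m : ℕ} (hn : 0 < n) (hm : 0 < m)
    (B : Matrix (Fin n ⊕ Fin m) (Fin n ⊕ Fin m) ℝ) (hB : IsSusceptance B)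
    (k : Fin m → ℝ) (hk : ∀ i, k i < 0)
    (EN : ℝ) (hEN : 0 < EN) (QL : Fin n → ℝ)
    (hinv1 : IsUnit (B.toBlocks₂₂ + Matrix.diagonal k).det)
    (Bred : Matrix (Fin n) (Fin n) ℝ)
    (hBred : Bred = B.toBlocks₁₁ -
      B.toBlocks₁₂ * (B.toBlocks₂₂ + Matrix.diagonal k)⁻¹ * B.toBlocks₂₁)
    (hinv2 : IsUnit Bred.det) :
    let EL : Fin n → ℝ := fun i => EN * (1 - (1 / EN ^ 2) * Bred⁻¹.mulVec QL i)
    let EI : Fin m → ℝ := (B.toBlocks₂₂ + Matrix.diagonal k)⁻¹.mulVec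
      (-(B.toBlocks₂₁.mulVec EL) +
        (Matrix.diagonal k).mulVec (Function.const (Fin m) EN))
    (EI = Function.const (Fin m) EN + (1 / EN) •
        ((B.toBlocks₂₂ + Matrix.diagonal k)⁻¹ * B.toBlocks₂₁ * Bred⁻¹).mulVec QL) ∧
    (EN • (Matrix.diagonal k).mulVec (EI - Function.const (Fin m) EN) =
      (Matrix.diagonal k * (B.toBlocks₂₂ + Matrix.diagonal k)⁻¹ * B.toBlocks₂₁ *
        Bred⁻¹).mulVec QL) :=
  linearized_power_sharing_general B hB k EN hEN QL hinv1 Bred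
end

section
/- (High-gain limit of power sharing: distance-based sharing) Let B be the susceptance matrix of a connected weighted graph partitioned into loads and inverters, and K_I diagonal with strictly negative entries. For ε > 0 define B_{red,ε} := B_LL − B_LI(B_II + εK_I)^{−1}B_IL and S_ε := εK_I(B_II + εK_I)^{−1}B_IL B_{red,ε}^{−1} (all inverses exist for ε > 0). Then S_ε converges to B_IL B_LL^{−1} as ε → +∞. -/
/-!
For `ε > 0`, `B + diag(0, ε K_I)` is minus a grounded Laplacian: its quadratic form
`-½ ∑ B_ij (x_i - x_j)² + ε ∑ K_i x_i²` is negative unless `x` is constant (by connectivity) and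
vanishes on the inverters, i.e. unless `x = 0`. So this matrix and its principal blocks
`B_II + ε K_I` and `B_LL` are invertible, and the Schur determinant formula makes `B_red,ε`
invertible too. For the limit put `t = 1/ε`:
`S_ε = K_I (t B_II + K_I)⁻¹ B_IL (B_LL - t B_LI (t B_II + K_I)⁻¹ B_IL)⁻¹`
is continuous at `t = 0`, where it equals `B_IL B_LL⁻¹`.
-/
open Matrix

open Filter Topology

section MatrixContinuity

variable {X R : Type*} [TopologicalSpace X] [TopologicalSpace R] {x : X}

theorem ContinuousAt.matrix_mul {l p q : Type*} [Fintype p] [Mul R] [AddCommMonoid R]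
    [ContinuousAdd R] [ContinuousMul R] {f : X → Matrix l p R} {g : X → Matrix p q R}
    (hf : ContinuousAt f x) (hg : ContinuousAt g x) : ContinuousAt (fun y => f y * g y) x :=
  (continuous_fst.matrix_mul continuous_snd).continuousAt.comp (hf.prodMk hg)

theorem ContinuousAt.matrix_inv {p : Type*} [Fintype p] [DecidableEq p] [Field R]
    [IsTopologicalRing R] [ContinuousInv₀ R] {f : X → Matrix p p R}
    (hf : ContinuousAt f x) (hdet : (f x).det ≠ 0) : ContinuousAt (fun y => (f y)⁻¹) x := by
  refine (continuousAt_matrix_inv _ ?_).comp hf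
  rw [Ring.inverse_eq_inv']
  exact continuousAt_inv₀ hdet

end MatrixContinuity

theorem Matrix.inv_smul_of_ne_zero {p K : Type*} [Fintype p] [DecidableEq p] [Field K]
    (A : Matrix p p K) {c : K} (hc : c ≠ 0) : (c • A)⁻¹ = c⁻¹ • A⁻¹ := by
  by_cases hA : IsUnit A.det
  · exact inv_smul' A (Units.mk0 c hc) hA
  · have hcA : ¬IsUnit (c • A).det := by
      rwa [det_smul, IsUnit.mul_iff, and_iff_right ((Ne.isUnit hc).pow _)]
    rw [nonsing_inv_apply_not_isUnit _ hA, nonsing_inv_apply_not_isUnit _ hcA, smul_zero]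

theorem tendsto_smul_mul_inv_mul_mul_inv_schur {p q : Type*} [Fintype p] [DecidableEq p]
    [Fintype q] [DecidableEq q] (A₁₁ : Matrix p p ℝ) (A₁₂ : Matrix p q ℝ) (A₂₁ : Matrix q p ℝ)
    (A₂₂ K : Matrix q q ℝ) (h₁₁ : A₁₁.det ≠ 0) (hK : K.det ≠ 0) :
    Tendsto (fun ε : ℝ => (ε • K) * (A₂₂ + ε • K)⁻¹ * A₂₁ *
        (A₁₁ - A₁₂ * (A₂₂ + ε • K)⁻¹ * A₂₁)⁻¹)
      atTop (𝓝 (A₂₁ * A₁₁⁻¹)) := by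
  set G : ℝ → Matrix q p ℝ := fun t =>
    K * (t • A₂₂ + K)⁻¹ * A₂₁ * (A₁₁ - t • (A₁₂ * (t • A₂₂ + K)⁻¹ * A₂₁))⁻¹ with hG
  have hinv : ContinuousAt (fun t : ℝ => (t • A₂₂ + K)⁻¹) 0 :=
    ((continuous_id.smul continuous_const).add continuous_const).continuousAt.matrix_inv
      (by simpa using hK)
  have hschur : ContinuousAt (fun t : ℝ => A₁₁ - t • (A₁₂ * (t • A₂₂ + K)⁻¹ * A₂₁)) 0 :=
    continuousAt_const.sub <| continuousAt_id.smul <|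
      (continuousAt_const.matrix_mul hinv).matrix_mul continuousAt_const
  have hG_cont : ContinuousAt G 0 :=
    ((continuousAt_const.matrix_mul hinv).matrix_mul continuousAt_const).matrix_mul
      (hschur.matrix_inv (by simpa using h₁₁))
  have hG_zero : G 0 = A₂₁ * A₁₁⁻¹ := by
    simp only [hG, zero_smul, zero_add, sub_zero,
      mul_nonsing_inv _ (isUnit_iff_ne_zero.2 hK), Matrix.one_mul]
  refine (hG_zero ▸ hG_cont.tendsto.comp tendsto_inv_atTop_zero).congr' ?_
  filter_upwards [eventually_gt_atTop 0] with ε hε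
  have hε' : ε ≠ 0 := hε.ne'
  have hrescale : (A₂₂ + ε • K)⁻¹ = ε⁻¹ • (ε⁻¹ • A₂₂ + K)⁻¹ := by
    rw [← inv_smul_of_ne_zero _ hε', smul_add, smul_inv_smul₀ hε']
  simp only [Function.comp_apply, hG, hrescale, Matrix.mul_smul, Matrix.smul_mul, smul_smul,
    inv_mul_cancel₀ hε', one_smul]

theorem two_mul_dotProduct_mulVec_self_of_sum_eq_zero {V : Type*} [Fintype V]
    {B : Matrix V V ℝ} (hs : B.IsSymm) (hr : ∀ i, ∑ j, B i j = 0) (x : V → ℝ) :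
    2 * (x ⬝ᵥ B *ᵥ x) = -∑ i, ∑ j, B i j * (x i - x j) ^ 2 := by
  have hcol : ∀ j, ∑ i, B i j = 0 := fun j => by simpa only [hs.apply] using hr j
  have hexpand : ∀ i j, B i j * (x i - x j) ^ 2
      = B i j * x i ^ 2 + B i j * x j ^ 2 - 2 * (x i * (B i j * x j)) := fun i j => by ring
  simp only [hexpand, Finset.sum_sub_distrib, Finset.sum_add_distrib, ← Finset.mul_sum,
    ← Finset.sum_mul, hr, hcol, Finset.sum_comm (f := fun i j => B i j * x j ^ 2)]
  simp [dotProduct, mulVec, Finset.mul_sum]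

namespace IsSusceptance

variable {V : Type*} [Fintype V] [DecidableEq V] {B : Matrix V V ℝ}

theorem sum_apply_eq_zero_s15 (hB : IsSusceptance B) (i : V) : ∑ j, B i j = 0 := by
  rw [← Finset.add_sum_erase _ _ (Finset.mem_univ i), hB.2.2.1 i, neg_add_cancel]

theorem mul_sq_sub_nonneg (hB : IsSusceptance B) (x : V → ℝ) (i j : V) :
    0 ≤ B i j * (x i - x j) ^ 2 := by
  rcases eq_or_ne i j with rfl | hij
  · simp
  · exact mul_nonneg (hB.2.1 i j hij) (sq_nonneg _)

theorem dotProduct_mulVec_self_nonpos (hB : IsSusceptance B) (x : V → ℝ) :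
    x ⬝ᵥ B *ᵥ x ≤ 0 := by
  have h := two_mul_dotProduct_mulVec_self_of_sum_eq_zero hB.1 hB.sum_apply_eq_zero_s15 x
  have := Finset.sum_nonneg fun i (_ : i ∈ Finset.univ) =>
    Finset.sum_nonneg fun j (_ : j ∈ Finset.univ) => hB.mul_sq_sub_nonneg x i j
  linarith

theorem apply_eq_of_dotProduct_mulVec_self_eq_zero (hB : IsSusceptance B) {x : V → ℝ}
    (hx : x ⬝ᵥ B *ᵥ x = 0) (a b : V) : x a = x b := by
  have hsum := two_mul_dotProduct_mulVec_self_of_sum_eq_zero hB.1 hB.sum_apply_eq_zero_s15 x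
  rw [hx, mul_zero, zero_eq_neg] at hsum
  have hterm : ∀ i j, B i j * (x i - x j) ^ 2 = 0 := fun i j =>
    (Finset.sum_eq_zero_iff_of_nonneg fun j _ => hB.mul_sq_sub_nonneg x i j).1
      ((Finset.sum_eq_zero_iff_of_nonneg fun i _ =>
        Finset.sum_nonneg fun j _ => hB.mul_sq_sub_nonneg x i j).1 hsum i (Finset.mem_univ i))
      j (Finset.mem_univ j)
  have hadj : ∀ i j, (suscGraph B).Adj i j → x i = x j := fun i j hij => by
    have := hterm i j
    rw [mul_eq_zero, or_iff_right hij.2.1.ne', sq_eq_zero_iff, sub_eq_zero] at this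
    exact this
  obtain ⟨w⟩ := hB.2.2.2.preconnected a b
  induction w with
  | nil => rfl
  | cons hij _ ih => exact (hadj _ _ hij).trans ih

theorem posDef_neg_add_diagonal (hB : IsSusceptance B) {d : V → ℝ} (hd : ∀ i, d i ≤ 0)
    {j : V} (hj : d j < 0) : (-(B + diagonal d)).PosDef := by
  refine .of_dotProduct_mulVec_pos ?_ fun x hx => ?_
  · exact (isHermitian_iff_isSymm.2 (hB.1.add (isSymm_diagonal d))).neg
  have hdiag : x ⬝ᵥ diagonal d *ᵥ x = ∑ i, d i * x i ^ 2 := by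
    simp only [dotProduct, mulVec_diagonal]
    exact Finset.sum_congr rfl fun i _ => by ring
  have hterm : ∀ i, d i * x i ^ 2 ≤ 0 := fun i =>
    mul_nonpos_of_nonpos_of_nonneg (hd i) (sq_nonneg _)
  have hB_le := hB.dotProduct_mulVec_self_nonpos x
  have hD_le : x ⬝ᵥ diagonal d *ᵥ x ≤ 0 := hdiag ▸ Finset.sum_nonpos fun i _ => hterm i
  simp only [star_trivial, neg_mulVec, add_mulVec, dotProduct_neg, dotProduct_add]
  by_contra! hle
  have hconst := hB.apply_eq_of_dotProduct_mulVec_self_eq_zero (by linarith)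
  have hxj : x j = 0 := by
    have hsum : ∑ i, d i * x i ^ 2 = 0 := by linarith
    have := (Finset.sum_eq_zero_iff_of_nonpos fun i _ => hterm i).1 hsum j (Finset.mem_univ j)
    rwa [mul_eq_zero, or_iff_right hj.ne, sq_eq_zero_iff] at this
  exact hx (funext fun i => (hconst i j).trans hxj)

theorem isUnit_submatrix_add_diagonal (hB : IsSusceptance B) {d : V → ℝ} (hd : ∀ i, d i ≤ 0)
    {j : V} (hj : d j < 0) {ι : Type*} [Fintype ι] [DecidableEq ι] {e : ι → V}
    (he : Function.Injective e) : IsUnit ((B + diagonal d).submatrix e e) := by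
  rw [← neg_neg ((B + diagonal d).submatrix e e)]
  exact ((hB.posDef_neg_add_diagonal hd hj).submatrix he).isUnit.neg

end IsSusceptance

theorem Matrix.add_diagonal_sumElim_zero {l o R : Type*} [DecidableEq l] [DecidableEq o]
    [AddZeroClass R] (B : Matrix (l ⊕ o) (l ⊕ o) R) (v : o → R) :
    B + diagonal (Sum.elim 0 v) =
      fromBlocks B.toBlocks₁₁ B.toBlocks₁₂ B.toBlocks₂₁ (B.toBlocks₂₂ + diagonal v) := by
  conv_lhs => rw [← fromBlocks_toBlocks B, ← fromBlocks_diagonal]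
  rw [fromBlocks_add]
  simp

namespace IsSusceptance

variable {l o : Type*} [Fintype l] [Fintype o] [DecidableEq l] [DecidableEq o]
  {B : Matrix (l ⊕ o) (l ⊕ o) ℝ} {v : o → ℝ}

theorem isUnit_add_diagonal_sumElim_zero (hB : IsSusceptance B) [Nonempty o]
    (hv : ∀ i, v i < 0) : IsUnit (B + diagonal (Sum.elim 0 v)) := by
  obtain ⟨j⟩ := ‹Nonempty o›
  simpa using hB.isUnit_submatrix_add_diagonal (d := Sum.elim 0 v) (j := Sum.inr j)
    (Sum.forall.2 ⟨fun _ => le_rfl, fun i => (hv i).le⟩) (hv j) Function.injective_id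

theorem isUnit_toBlocks₁₁ (hB : IsSusceptance B) [Nonempty o] : IsUnit B.toBlocks₁₁ := by
  obtain ⟨j⟩ := ‹Nonempty o›
  have := hB.isUnit_submatrix_add_diagonal (d := Sum.elim 0 fun _ => -1) (j := Sum.inr j)
    (Sum.forall.2 ⟨fun _ => le_rfl, fun _ => by norm_num⟩) (by norm_num) Sum.inl_injective
  rwa [add_diagonal_sumElim_zero] at this

theorem isUnit_toBlocks₂₂_add_diagonal (hB : IsSusceptance B) [Nonempty o]
    (hv : ∀ i, v i < 0) :
    IsUnit (B.toBlocks₂₂ + diagonal v) := by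
  obtain ⟨j⟩ := ‹Nonempty o›
  have := hB.isUnit_submatrix_add_diagonal (d := Sum.elim 0 v) (j := Sum.inr j)
    (Sum.forall.2 ⟨fun _ => le_rfl, fun i => (hv i).le⟩) (hv j) Sum.inr_injective
  rwa [add_diagonal_sumElim_zero] at this

theorem isUnit_det_schurComplement (hB : IsSusceptance B) [Nonempty o] (hv : ∀ i, v i < 0) :
    IsUnit (B.toBlocks₁₁ - B.toBlocks₁₂ * (B.toBlocks₂₂ + diagonal v)⁻¹ * B.toBlocks₂₁).det := by
  have := (hB.isUnit_toBlocks₂₂_add_diagonal hv).invertible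
  have hdet := (isUnit_iff_isUnit_det _).1 (hB.isUnit_add_diagonal_sumElim_zero hv)
  rw [add_diagonal_sumElim_zero, det_fromBlocks₂₂, invOf_eq_nonsing_inv] at hdet
  exact isUnit_of_mul_isUnit_right hdet

end IsSusceptance

theorem power_sharing_high_gain_limit_general {n m : ℕ} (hm : 0 < m)
    (B : Matrix (Fin n ⊕ Fin m) (Fin n ⊕ Fin m) ℝ) (hB : IsSusceptance B)
    (k : Fin m → ℝ) (hk : ∀ i, k i < 0) :
    (∀ ε : ℝ, 0 < ε →
      IsUnit (B.toBlocks₂₂ + ε • Matrix.diagonal k).det ∧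
      IsUnit (B.toBlocks₁₁ -
        B.toBlocks₁₂ * (B.toBlocks₂₂ + ε • Matrix.diagonal k)⁻¹ *
          B.toBlocks₂₁).det) ∧
    Filter.Tendsto
      (fun ε : ℝ =>
        (ε • Matrix.diagonal k) * (B.toBlocks₂₂ + ε • Matrix.diagonal k)⁻¹ *
          B.toBlocks₂₁ *
          (B.toBlocks₁₁ -
            B.toBlocks₁₂ * (B.toBlocks₂₂ + ε • Matrix.diagonal k)⁻¹ *
              B.toBlocks₂₁)⁻¹)
      Filter.atTop (nhds (B.toBlocks₂₁ * B.toBlocks₁₁⁻¹)) := by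
  have : Nonempty (Fin m) := Fin.pos_iff_nonempty.1 hm
  refine ⟨fun ε hε => ?_, ?_⟩
  · have hεk : ∀ i, (ε • k) i < 0 := fun i => mul_neg_of_pos_of_neg hε (hk i)
    rw [← diagonal_smul]
    exact ⟨(isUnit_iff_isUnit_det _).1 (hB.isUnit_toBlocks₂₂_add_diagonal hεk),
      hB.isUnit_det_schurComplement hεk⟩
  · refine tendsto_smul_mul_inv_mul_mul_inv_schur _ _ _ _ _
      ((isUnit_iff_isUnit_det _).1 hB.isUnit_toBlocks₁₁).ne_zero ?_
    rw [det_diagonal]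
    exact Finset.prod_ne_zero_iff.2 fun i _ => (hk i).ne

/-- High-gain limit of power sharing: all the inverses defining
`S_ε = ε K_I (B_II + ε K_I)⁻¹ B_IL B_{red,ε}⁻¹` exist for `ε > 0`, and
`S_ε → B_IL B_LL⁻¹` as `ε → +∞`. -/
theorem power_sharing_high_gain_limit {n m : ℕ} (hn : 0 < n) (hm : 0 < m)
    (B : Matrix (Fin n ⊕ Fin m) (Fin n ⊕ Fin m) ℝ) (hB : IsSusceptance B)
    (k : Fin m → ℝ) (hk : ∀ i, k i < 0) :
    (∀ ε : ℝ, 0 < ε →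
      IsUnit (B.toBlocks₂₂ + ε • Matrix.diagonal k).det ∧
      IsUnit (B.toBlocks₁₁ -
        B.toBlocks₁₂ * (B.toBlocks₂₂ + ε • Matrix.diagonal k)⁻¹ *
          B.toBlocks₂₁).det) ∧
    Filter.Tendsto
      (fun ε : ℝ =>
        (ε • Matrix.diagonal k) * (B.toBlocks₂₂ + ε • Matrix.diagonal k)⁻¹ *
          B.toBlocks₂₁ *
          (B.toBlocks₁₁ -
            B.toBlocks₁₂ * (B.toBlocks₂₂ + ε • Matrix.diagonal k)⁻¹ *
              B.toBlocks₂₁)⁻¹)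
      Filter.atTop (nhds (B.toBlocks₂₁ * B.toBlocks₁₁⁻¹)) :=
  power_sharing_high_gain_limit_general hm B hB k hk
end
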